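/- Under Assouad's lemma with the hypercube of Proposition 3.1: if for every pair of neighboring corners the affinity is at least 1 − √(ατ/2) and neighboring corners are at ℓ_1 distance 2τ/n, then any estimator (in particular any α-DP mechanism Q_n) satisfies sup_θ R(θ,Q_n) ≥ (k−1)·(τ/(2n))·(1 − √(ατ/2)). Choosing τ = t/α with t < 1 and α < 1 yields sup_θ R(θ,Q_n) ≥ c_0(k−1)/(αn). -/

import Mathlib

/-!
Flipping coordinate `i` of a corner of the hypercube moves the `i`-th coordinate of the
parameter by `τ/n`, so by the triangle inequality the two coordinate losses at any output
add up to at least `τ/n`; integrating against the common part of the two output laws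
(Le Cam's two-point bound) gives `(τ/n)·(1 - √(ατ/2))` for each neighbouring pair.
Summing over all corners and coordinates, each pair is counted twice, so the average over the
`2^K` corners of the `ℓ₁` risk, and hence the largest one, is at least `K·(τ/(2n))·(1 - √(ατ/2))`.
-/

open MeasureTheory

noncomputable def l1 {k : ℕ} (θ θ' : Fin k → ℝ) : ℝ := ∑ j, |θ j - θ' j|

open Classical in
noncomputable def corner (n τ K : ℕ) (σ : Fin K → Bool) : Fin (K + 1) → ℝ :=
  fun j =>
    if h : (j : ℕ) < K then (if σ ⟨j, h⟩ then (τ : ℝ) / n else 0)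
    else ((n : ℝ) - τ * ((Finset.univ.filter fun i => σ i = true).card : ℝ)) / n

open scoped ENNReal

theorem mul_inf_apply_univ_le_lintegral_add {X : Type*} [MeasurableSpace X] (μ ν : Measure X)
    {f g : X → ℝ≥0∞} (hf : Measurable f) {d : ℝ≥0∞} (h : ∀ x, d ≤ f x + g x) :
    d * (μ ⊓ ν) Set.univ ≤ ∫⁻ x, f x ∂μ + ∫⁻ x, g x ∂ν :=
  calc d * (μ ⊓ ν) Set.univ = ∫⁻ _, d ∂(μ ⊓ ν) := (lintegral_const d).symm
    _ ≤ ∫⁻ x, f x + g x ∂(μ ⊓ ν) := lintegral_mono h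
    _ = ∫⁻ x, f x ∂(μ ⊓ ν) + ∫⁻ x, g x ∂(μ ⊓ ν) := lintegral_add_left hf g
    _ ≤ ∫⁻ x, f x ∂μ + ∫⁻ x, g x ∂ν :=
      add_le_add (lintegral_mono' inf_le_left le_rfl) (lintegral_mono' inf_le_right le_rfl)

theorem involutive_update_not {K : ℕ} (i : Fin K) :
    Function.Involutive fun σ : Fin K → Bool => Function.update σ i (!σ i) := by
  intro σ
  funext j
  rcases eq_or_ne j i with rfl | hji
  · simp
  · simp [hji]

theorem exists_card_mul_le_two_mul_sum_of_le_add_update_not {K : ℕ}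
    (F : (Fin K → Bool) → Fin K → ℝ≥0∞) {a : ℝ≥0∞}
    (h : ∀ σ i, a ≤ F σ i + F (Function.update σ i (!σ i)) i) :
    ∃ σ, (K : ℝ≥0∞) * a ≤ 2 * ∑ i, F σ i := by
  by_contra! hlt
  have hflip : ∀ i, ∑ σ, F (Function.update σ i (!σ i)) i = ∑ σ, F σ i := fun i =>
    (involutive_update_not i).bijective.sum_comp (F · i)
  refine lt_irrefl (∑ _σ : Fin K → Bool, (K : ℝ≥0∞) * a) ?_
  calc ∑ _σ : Fin K → Bool, (K : ℝ≥0∞) * a = ∑ i : Fin K, ∑ _σ : Fin K → Bool, a := by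
        simp [Finset.sum_const, nsmul_eq_mul, mul_left_comm]
    _ ≤ ∑ i, ∑ σ, (F σ i + F (Function.update σ i (!σ i)) i) :=
        Finset.sum_le_sum fun i _ => Finset.sum_le_sum fun σ _ => h σ i
    _ = ∑ σ, 2 * ∑ i, F σ i := by
        simp only [Finset.sum_add_distrib, hflip, ← two_mul, ← Finset.mul_sum]
        rw [Finset.sum_comm]
    _ < ∑ _σ : Fin K → Bool, (K : ℝ≥0∞) * a :=
        ENNReal.sum_lt_sum_of_nonempty Finset.univ_nonempty fun σ _ => hlt σ

theorem sum_abs_sub_castSucc_le_l1 {K : ℕ} (θ θ' : Fin (K + 1) → ℝ) :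
    ∑ i : Fin K, |θ i.castSucc - θ' i.castSucc| ≤ l1 θ θ' := by
  rw [l1, Fin.sum_univ_castSucc]
  exact le_add_of_nonneg_right (abs_nonneg _)

theorem corner_castSucc (n τ K : ℕ) (σ : Fin K → Bool) (i : Fin K) :
    corner n τ K σ i.castSucc = if σ i then (τ : ℝ) / n else 0 := by
  simp [corner, i.isLt]

theorem abs_corner_sub_corner_update_not (n τ K : ℕ) (σ : Fin K → Bool) (i : Fin K) :
    |corner n τ K σ i.castSucc - corner n τ K (Function.update σ i (!σ i)) i.castSucc| =
      (τ : ℝ) / n := by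
  have hτn : (0 : ℝ) ≤ τ / n := by positivity
  rw [corner_castSucc, corner_castSucc, Function.update_self]
  cases σ i <;> simp [abs_of_nonneg hτn]

theorem le_lintegral_ofReal_abs_sub_corner_add (n τ K : ℕ) (σ : Fin K → Bool) (i : Fin K)
    (μ ν : Measure (Fin (K + 1) → ℝ)) :
    ENNReal.ofReal ((τ : ℝ) / n) * (μ ⊓ ν) Set.univ ≤
      ∫⁻ t, ENNReal.ofReal |t i.castSucc - corner n τ K σ i.castSucc| ∂μ +
        ∫⁻ t, ENNReal.ofReal
          |t i.castSucc - corner n τ K (Function.update σ i (!σ i)) i.castSucc| ∂ν := by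
  refine mul_inf_apply_univ_le_lintegral_add μ ν
    ((measurable_pi_apply _).sub_const _).abs.ennreal_ofReal fun t => ?_
  rw [← ENNReal.ofReal_add (abs_nonneg _) (abs_nonneg _)]
  refine ENNReal.ofReal_le_ofReal ?_
  rw [← abs_corner_sub_corner_update_not n τ K σ i, abs_sub_comm (t _)]
  exact abs_sub_le _ _ _

theorem sum_lintegral_ofReal_abs_sub_castSucc_le_lintegral_l1 {K : ℕ} (θ : Fin (K + 1) → ℝ)
    (μ : Measure (Fin (K + 1) → ℝ)) :
    ∑ i : Fin K, ∫⁻ t, ENNReal.ofReal |t i.castSucc - θ i.castSucc| ∂μ ≤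
      ∫⁻ t, ENNReal.ofReal (l1 t θ) ∂μ := by
  rw [← lintegral_finsetSum _ fun i _ =>
    ((measurable_pi_apply _).sub_const _).abs.ennreal_ofReal]
  refine lintegral_mono fun t => ?_
  rw [← ENNReal.ofReal_sum_of_nonneg fun i _ => abs_nonneg _]
  exact ENNReal.ofReal_le_ofReal (sum_abs_sub_castSucc_le_l1 t θ)

theorem stmt17_general {n τ K : ℕ}
    (Q : (Fin (K + 1) → ℝ) → Measure (Fin (K + 1) → ℝ))
    (α : ℝ)
    (haff : ∀ (σ : Fin K → Bool) (i : Fin K),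
      ENNReal.ofReal (1 - Real.sqrt (α * τ / 2)) ≤
        (Q (corner n τ K σ) ⊓ Q (corner n τ K (Function.update σ i (!σ i)))) Set.univ) :
    ∃ σ : Fin K → Bool,
      ENNReal.ofReal ((K : ℝ) * ((τ : ℝ) / (2 * n)) * (1 - Real.sqrt (α * τ / 2))) ≤
        ∫⁻ t, ENNReal.ofReal (l1 t (corner n τ K σ)) ∂(Q (corner n τ K σ)) := by
  set c := ENNReal.ofReal (1 - Real.sqrt (α * τ / 2))
  obtain ⟨σ, hσ⟩ := exists_card_mul_le_two_mul_sum_of_le_add_update_not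
    (fun σ i => ∫⁻ t, ENNReal.ofReal |t i.castSucc - corner n τ K σ i.castSucc|
      ∂Q (corner n τ K σ))
    (a := ENNReal.ofReal ((τ : ℝ) / n) * c) fun σ i =>
      (mul_le_mul_right (haff σ i) _).trans (le_lintegral_ofReal_abs_sub_corner_add n τ K σ i _ _)
  refine ⟨σ, ?_⟩
  have hK : (K : ℝ) * ((τ : ℝ) / (2 * n)) * (1 - Real.sqrt (α * τ / 2)) =
      K * (τ / n) * (1 - Real.sqrt (α * τ / 2)) / 2 := by
    ring
  rw [hK, ENNReal.ofReal_div_of_pos two_pos, ENNReal.ofReal_mul (by positivity),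
    ENNReal.ofReal_mul (by positivity), ENNReal.ofReal_natCast, ENNReal.ofReal_ofNat, mul_assoc]
  refine ENNReal.div_le_of_le_mul' (hσ.trans ?_)
  exact mul_le_mul_right (sum_lintegral_ofReal_abs_sub_castSucc_le_lintegral_l1 _ _) 2

/-- **Assouad's lemma for the DP hypercube.** If at every pair of neighboring corners
(which are at `ℓ₁` distance `2τ/n`) the affinity of the output distributions is at
least `1 - √(ατ/2)`, then the worst-case `ℓ₁` risk is at least
`(k-1)·(τ/(2n))·(1 - √(ατ/2))` (with `k - 1 = K`): some corner has risk that large. -/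
theorem stmt17 {n τ K : ℕ} (hn : 0 < n) (hτ : 0 < τ) (hτK : τ * K ≤ n)
    (Q : (Fin (K + 1) → ℝ) → Measure (Fin (K + 1) → ℝ))
    (hprob : ∀ θ, IsProbabilityMeasure (Q θ)) (α : ℝ) (hα : 0 < α)
    (haff : ∀ (σ : Fin K → Bool) (i : Fin K),
      ENNReal.ofReal (1 - Real.sqrt (α * τ / 2)) ≤
        (Q (corner n τ K σ) ⊓ Q (corner n τ K (Function.update σ i (!σ i)))) Set.univ) :
    ∃ σ : Fin K → Bool,
      ENNReal.ofReal ((K : ℝ) * ((τ : ℝ) / (2 * n)) * (1 - Real.sqrt (α * τ / 2))) ≤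
        ∫⁻ t, ENNReal.ofReal (l1 t (corner n τ K σ)) ∂(Q (corner n τ K σ)) :=
  stmt17_general Q α haff
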